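/- arXiv:2503.21498 — 2 statements merged into one kernel-verified Lean document; each statement's English description precedes it below -/
import Mathlib

section
/- Let ρ ∈ (0,1), let M > 0, let (α_t)_{t≥1} be a positive nonincreasing sequence of real numbers, and let (b_t)_{t≥1} be a sequence of real numbers with 0 ≤ b_t ≤ 4M² for all t. Then for every T ≥ 1, Σ_{t=1}^{T} ρ^{T−t} (b_t − b_{t+1}) / (2α_t) ≤ 2M² / α_T. -/
/-!
Induction on `n` shows that the discounted sum up to `n` is at most `(4M² - b_{n+1}) / (2α_n)`.
Discounting by `ρ ≤ 1` and replacing `α_n` with the smaller `α_{n+1}` can only enlarge this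
nonnegative bound. Adding the next telescoping term `(b_{n+1} - b_{n+2}) / (2α_{n+1})` then turns
`b_{n+1}` into `b_{n+2}`. At the end, dropping `b_{T+1} ≥ 0` gives `4M² / (2α_T)`.
-/

open Finset

theorem sum_Icc_pow_sub_mul_succ {R : Type*} [CommSemiring R] (ρ : R) (f : ℕ → R) (n : ℕ) :
    ∑ t ∈ Icc 1 (n + 1), ρ ^ (n + 1 - t) * f t
      = ρ * ∑ t ∈ Icc 1 n, ρ ^ (n - t) * f t + f (n + 1) := by
  rw [sum_Icc_succ_top (by omega), Nat.sub_self, pow_zero, one_mul, mul_sum]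
  congr 1
  refine sum_congr rfl fun t ht => ?_
  rw [Nat.sub_add_comm (mem_Icc.mp ht).2, pow_succ]
  ring

theorem sum_Icc_pow_sub_mul_sub_div_le {ρ B : ℝ} {a b : ℕ → ℝ} (hρ0 : 0 ≤ ρ) (hρ1 : ρ ≤ 1)
    (ha : ∀ t, 0 < a t) (ha_anti : Antitone a) (hb : ∀ t, b t ≤ B) (n : ℕ) :
    ∑ t ∈ Icc 1 n, ρ ^ (n - t) * ((b t - b (t + 1)) / a t) ≤ (B - b (n + 1)) / a n := by
  induction n with
  | zero => simpa using div_nonneg (sub_nonneg.mpr (hb 1)) (ha 0).le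
  | succ n ih =>
    have hgap : 0 ≤ (B - b (n + 1)) / a n := div_nonneg (sub_nonneg.mpr (hb _)) (ha n).le
    calc ∑ t ∈ Icc 1 (n + 1), ρ ^ (n + 1 - t) * ((b t - b (t + 1)) / a t)
        = ρ * ∑ t ∈ Icc 1 n, ρ ^ (n - t) * ((b t - b (t + 1)) / a t)
            + (b (n + 1) - b (n + 2)) / a (n + 1) := sum_Icc_pow_sub_mul_succ ρ _ n
      _ ≤ ρ * ((B - b (n + 1)) / a n) + (b (n + 1) - b (n + 2)) / a (n + 1) := by gcongr
      _ ≤ (B - b (n + 1)) / a n + (b (n + 1) - b (n + 2)) / a (n + 1) := by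
        gcongr; exact mul_le_of_le_one_left hgap hρ1
      _ ≤ (B - b (n + 1)) / a (n + 1) + (b (n + 1) - b (n + 2)) / a (n + 1) := by
        gcongr
        · exact sub_nonneg.mpr (hb _)
        · exact ha _
        · exact ha_anti n.le_succ
      _ = (B - b (n + 2)) / a (n + 1) := by rw [← add_div]; ring_nf

theorem stmt_9_general (ρ M : ℝ) (hρ0 : 0 < ρ) (hρ1 : ρ < 1)
    (α b : ℕ → ℝ)
    (hαpos : ∀ t, 0 < α t) (hαmono : ∀ t, α (t + 1) ≤ α t)
    (hb0 : ∀ t, 0 ≤ b t) (hb4 : ∀ t, b t ≤ 4 * M ^ 2)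
    (T : ℕ) :
    ∑ t ∈ Finset.Icc 1 T, ρ ^ (T - t) * ((b t - b (t + 1)) / (2 * α t))
      ≤ 2 * M ^ 2 / α T := by
  have hαanti : Antitone fun t => 2 * α t :=
    antitone_nat_of_succ_le fun t => by linarith [hαmono t]
  calc _ ≤ (4 * M ^ 2 - b (T + 1)) / (2 * α T) :=
        sum_Icc_pow_sub_mul_sub_div_le hρ0.le hρ1.le (fun t => by linarith [hαpos t]) hαanti hb4 T
    _ ≤ 4 * M ^ 2 / (2 * α T) := by
        gcongr
        · linarith [hαpos T]
        · linarith [hb0 (T + 1)]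
    _ = 2 * M ^ 2 / α T := by field_simp; ring

/-- the telescoping estimate (39). Let `ρ ∈ (0,1)`, `M > 0`,
`(α_t)` positive and nonincreasing, and `0 ≤ b_t ≤ 4M²` for all `t`. Then for every
`T ≥ 1`, `∑_{t=1}^{T} ρ^{T-t} (b_t - b_{t+1}) / (2α_t) ≤ 2M²/α_T`. -/
theorem stmt_9 (ρ M : ℝ) (hρ0 : 0 < ρ) (hρ1 : ρ < 1) (hM : 0 < M)
    (α b : ℕ → ℝ)
    (hαpos : ∀ t, 0 < α t) (hαmono : ∀ t, α (t + 1) ≤ α t)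
    (hb0 : ∀ t, 0 ≤ b t) (hb4 : ∀ t, b t ≤ 4 * M ^ 2)
    (T : ℕ) (hT : 1 ≤ T) :
    ∑ t ∈ Finset.Icc 1 T, ρ ^ (T - t) * ((b t - b (t + 1)) / (2 * α t))
      ≤ 2 * M ^ 2 / α T :=
  stmt_9_general ρ M hρ0 hρ1 α b hαpos hαmono hb0 hb4 T
end

section
/- Let W = (w_{ij}) be an n×n doubly stochastic matrix with nonnegative entries, and suppose there exist constants γ > 0 and λ ∈ (0,1) such that |[W^k]_{ij} − 1/n| ≤ γ λ^k for all i, j ∈ {1,…,n} and all integers k ≥ 1. Let (x_i^t)_{t≥1} ⊆ ℝ^d (i = 1,…,n) be sequences satisfying x_i^{t+1} = Σ_{j=1}^{n} w_{ij} x_j^t + ε_{i,t} for all t ≥ 1, where ε_{i,t} := x_i^{t+1} − Σ_{j=1}^{n} w_{ij} x_j^t, and set x̄^t := (1/n) Σ_{i=1}^{n} x_i^t. Then for all i ∈ {1,…,n} and all t ≥ 2: ‖x_i^t − x̄^t‖ ≤ γ λ^{t−2} Σ_{j=1}^{n} ‖x_j^1‖ + (1/n) Σ_{j=1}^{n} ‖ε_{j,t−1}‖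 + ‖ε_{i,t−1}‖ + γ Σ_{s=1}^{t−2} λ^{t−s−2} Σ_{j=1}^{n} ‖ε_{j,s}‖. -/
/-!
Unrolling `x^{t+1} = W x^t + ε_t` gives `x^{m+1} = W^m x^1 + ∑_{s=1}^m W^{m-s} ε_s`. Averaging
is multiplication by `J = (1/n) 𝟙𝟙ᵀ`, and since the columns of `W` sum to one, `J W^k = J`.
Hence `x^{m+1} - x̄^{m+1} = (W^m - J) x^1 + ∑_s (W^{m-s} - J) ε_s`. For `k ≥ 1` every entry
of `W^k - J` has absolute value at most `γ λ^k`, while the last term `s = m` involves `I - J`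
and is bounded by the triangle inequality.
-/

open Finset Matrix

theorem Module.End.eq_pow_apply_add_sum_of_forall_eq_add {R M : Type*} [Semiring R]
    [AddCommMonoid M] [Module R M] {f : Module.End R M} {y e : ℕ → M}
    (hy : ∀ t, 1 ≤ t → y (t + 1) = f (y t) + e t) (m : ℕ) :
    y (m + 1) = (f ^ m) (y 1) + ∑ s ∈ Icc 1 m, (f ^ (m - s)) (e s) := by
  induction m with
  | zero => simp
  | succ m ih =>
    have hpow : ∀ s ∈ Icc 1 m, f ((f ^ (m - s)) (e s)) = (f ^ (m + 1 - s)) (e s) := by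
      intro s hs
      rw [Nat.sub_add_comm (mem_Icc.mp hs).2, pow_succ', Module.End.mul_apply]
    rw [hy (m + 1) (by omega), ih, map_add, map_sum, sum_congr rfl hpow,
      sum_Icc_succ_top (by omega), Nat.sub_self, pow_zero, Module.End.one_apply,
      ← Module.End.mul_apply, ← pow_succ', add_assoc]

namespace Matrix

variable {ι R E : Type*} [Fintype ι] [DecidableEq ι]

section Ring

variable [CommRing R] [AddCommGroup E] [Module R E]

def toEndPi : Matrix ι ι R →+* Module.End R (ι → E) where
  toFun W :=
    { toFun := fun v i => ∑ j, W i j • v j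
      map_add' := fun v w => by ext i; simp only [Pi.add_apply, smul_add, sum_add_distrib]
      map_smul' := fun r v => by
        ext i; simp only [Pi.smul_apply, smul_sum, smul_comm r, RingHom.id_apply] }
  map_one' := LinearMap.ext fun v => funext fun i => by simp [one_apply]
  map_mul' A B := LinearMap.ext fun v => funext fun i => by
    simp only [LinearMap.coe_mk, AddHom.coe_mk, Module.End.mul_apply, mul_apply, sum_smul,
      smul_sum, mul_smul]
    exact sum_comm
  map_zero' := LinearMap.ext fun v => funext fun i => by simp
  map_add' A B := LinearMap.ext fun v => funext fun i => by
    simp [add_smul, sum_add_distrib]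

theorem toEndPi_apply (W : Matrix ι ι R) (v : ι → E) (i : ι) :
    toEndPi W v i = ∑ j, W i j • v j := rfl

theorem toEndPi_one_sub_const_apply (c : R) (v : ι → E) (i : ι) :
    toEndPi (1 - of fun _ _ => c) v i = v i - c • ∑ j, v j := by
  rw [map_sub, map_one, LinearMap.sub_apply, Module.End.one_apply, Pi.sub_apply, toEndPi_apply,
    smul_sum]
  rfl

theorem const_mul_pow_of_sum_col_eq_one {W : Matrix ι ι R} (hcol : ∀ j, ∑ i, W i j = 1)
    (c : R) (k : ℕ) : (of fun _ _ => c : Matrix ι ι R) * W ^ k = of fun _ _ => c := by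
  induction k with
  | zero => rw [pow_zero, mul_one]
  | succ k ih =>
    rw [pow_succ, ← mul_assoc, ih]
    ext i j
    simp [mul_apply, ← mul_sum, hcol]

theorem toEndPi_one_sub_const_eq {W : Matrix ι ι R} (hcol : ∀ j, ∑ i, W i j = 1) (c : R)
    {x ε : ℕ → ι → E} (hrec : ∀ t, 1 ≤ t → x (t + 1) = toEndPi W (x t) + ε t) (m : ℕ) :
    toEndPi (1 - of fun _ _ => c) (x (m + 1)) = toEndPi (W ^ m - of fun _ _ => c) (x 1)
      + ∑ s ∈ Icc 1 m, toEndPi (W ^ (m - s) - of fun _ _ => c) (ε s) := by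
  have hpow : ∀ k (v : ι → E), toEndPi (1 - of fun _ _ => c) ((toEndPi W ^ k) v)
      = toEndPi (W ^ k - of fun _ _ => c) v := by
    intro k v
    rw [← map_pow, ← Module.End.mul_apply, ← map_mul, sub_mul, one_mul,
      const_mul_pow_of_sum_col_eq_one hcol]
  rw [Module.End.eq_pow_apply_add_sum_of_forall_eq_add hrec m, map_add, map_sum, hpow]
  simp only [hpow]

end Ring

variable [SeminormedAddCommGroup E] [NormedSpace ℝ E]

theorem norm_toEndPi_apply_le {A : Matrix ι ι ℝ} {i : ι} {c : ℝ} (hA : ∀ j, |A i j| ≤ c)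
    (v : ι → E) : ‖toEndPi A v i‖ ≤ c * ∑ j, ‖v j‖ := by
  rw [toEndPi_apply, mul_sum]
  refine (norm_sum_le _ _).trans (sum_le_sum fun j _ => ?_)
  rw [norm_smul, Real.norm_eq_abs]
  exact mul_le_mul_of_nonneg_right (hA j) (norm_nonneg _)

theorem norm_toEndPi_one_sub_const_apply_le (c : ℝ) (v : ι → E) (i : ι) :
    ‖toEndPi (1 - of fun _ _ => c) v i‖ ≤ |c| * ∑ j, ‖v j‖ + ‖v i‖ := by
  rw [map_sub, map_one, LinearMap.sub_apply, Module.End.one_apply, Pi.sub_apply, add_comm]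
  exact (norm_sub_le _ _).trans
    (add_le_add_right (norm_toEndPi_apply_le (fun _ => le_rfl) v) _)

end Matrix

theorem stmt_10_general {d n : ℕ}
    (W : Matrix (Fin n) (Fin n) ℝ)
    (hcol : ∀ j, ∑ i, W i j = 1)
    (γ lam : ℝ) (hγ : 0 < γ) (hlam0 : 0 < lam) (hlam1 : lam < 1)
    (hmix : ∀ k : ℕ, 1 ≤ k → ∀ i j, |(W ^ k) i j - 1 / (n : ℝ)| ≤ γ * lam ^ k)
    (x ε : ℕ → Fin n → EuclideanSpace ℝ (Fin d))
    (hε : ∀ t, 1 ≤ t → ∀ i, ε t i = x (t + 1) i - ∑ j, W i j • x t j)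
    (xbar : ℕ → EuclideanSpace ℝ (Fin d))
    (hxbar : ∀ t, xbar t = (1 / (n : ℝ)) • ∑ i, x t i) :
    ∀ i, ∀ t, 2 ≤ t →
      ‖x t i - xbar t‖
        ≤ γ * lam ^ (t - 2) * ∑ j, ‖x 1 j‖
          + (1 / (n : ℝ)) * ∑ j, ‖ε (t - 1) j‖
          + ‖ε (t - 1) i‖
          + γ * ∑ s ∈ Finset.Icc 1 (t - 2), lam ^ (t - s - 2) * ∑ j, ‖ε s j‖ := by
  intro i t ht
  obtain ⟨m, rfl⟩ : ∃ m, t = m + 2 := ⟨t - 2, by omega⟩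
  set J : Matrix (Fin n) (Fin n) ℝ := of fun _ _ => 1 / (n : ℝ)
  have hrec : ∀ t, 1 ≤ t → x (t + 1) = toEndPi W (x t) + ε t := fun t ht =>
    funext fun i => by rw [Pi.add_apply, hε t ht i, toEndPi_apply, add_sub_cancel]
  have hdev : x (m + 2) i - xbar (m + 2) = toEndPi (W ^ (m + 1) - J) (x 1) i
      + toEndPi (1 - J) (ε (m + 1)) i
      + ∑ s ∈ Icc 1 m, toEndPi (W ^ (m + 1 - s) - J) (ε s) i := by
    have h := congrFun (toEndPi_one_sub_const_eq hcol (1 / (n : ℝ)) hrec (m + 1)) i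
    rw [sum_Icc_succ_top (by omega), Nat.sub_self, pow_zero, Pi.add_apply, Pi.add_apply,
      Finset.sum_apply, toEndPi_one_sub_const_apply, ← hxbar] at h
    rw [h]
    abel
  have hWJ : ∀ k, 1 ≤ k → ∀ j, |(W ^ k - J) i j| ≤ γ * lam ^ k := fun k hk j => hmix k hk i j
  have hanti : ∀ a b, a ≤ b → γ * lam ^ b ≤ γ * lam ^ a := fun a b hab =>
    mul_le_mul_of_nonneg_left (pow_le_pow_of_le_one hlam0.le hlam1.le hab) hγ.le
  have hfirst := norm_toEndPi_apply_le
    (fun j => (hWJ _ le_add_self j).trans (hanti m (m + 1) (by omega))) (x 1)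
  have hlast := norm_toEndPi_one_sub_const_apply_le (1 / (n : ℝ)) (ε (m + 1)) i
  rw [abs_of_nonneg (by positivity)] at hlast
  have hsum : ‖∑ s ∈ Icc 1 m, toEndPi (W ^ (m + 1 - s) - J) (ε s) i‖
      ≤ γ * ∑ s ∈ Icc 1 m, lam ^ (m + 2 - s - 2) * ∑ j, ‖ε s j‖ := by
    rw [mul_sum]
    refine (norm_sum_le _ _).trans (sum_le_sum fun s hs => ?_)
    have hs := mem_Icc.mp hs
    rw [← mul_assoc]
    exact norm_toEndPi_apply_le
      (fun j => (hWJ _ (by omega) j).trans (hanti _ _ (by omega))) _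
  rw [hdev, show m + 2 - 2 = m by omega, show m + 2 - 1 = m + 1 by omega]
  calc _ ≤ _ := norm_add₃_le
    _ ≤ _ := add_le_add (add_le_add hfirst hlast) hsum
    _ = _ := by ring

/-- Lemma 3 of the paper. Let `W` be an `n × n` doubly stochastic
matrix whose powers satisfy the geometric mixing bound `|[W^k]_{ij} - 1/n| ≤ γ λ^k`.
If the iterates satisfy `x_i^{t+1} = ∑_j w_{ij} x_j^t + ε_{i,t}` (i.e. `ε_{i,t}` is the
deviation of `x_i^{t+1}` from the consensus step) and `x̄^t = (1/n) ∑_i x_i^t`, then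
for every agent `i` and every `t ≥ 2`,
`‖x_i^t - x̄^t‖ ≤ γ λ^{t-2} ∑_j ‖x_j^1‖ + (1/n) ∑_j ‖ε_{j,t-1}‖ + ‖ε_{i,t-1}‖
  + γ ∑_{s=1}^{t-2} λ^{t-s-2} ∑_j ‖ε_{j,s}‖`. -/
theorem stmt_10 {d n : ℕ} (hn : 0 < n)
    (W : Matrix (Fin n) (Fin n) ℝ)
    (hpos : ∀ i j, 0 ≤ W i j)
    (hrow : ∀ i, ∑ j, W i j = 1)
    (hcol : ∀ j, ∑ i, W i j = 1)
    (γ lam : ℝ) (hγ : 0 < γ) (hlam0 : 0 < lam) (hlam1 : lam < 1)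
    (hmix : ∀ k : ℕ, 1 ≤ k → ∀ i j, |(W ^ k) i j - 1 / (n : ℝ)| ≤ γ * lam ^ k)
    (x ε : ℕ → Fin n → EuclideanSpace ℝ (Fin d))
    (hε : ∀ t, 1 ≤ t → ∀ i, ε t i = x (t + 1) i - ∑ j, W i j • x t j)
    (xbar : ℕ → EuclideanSpace ℝ (Fin d))
    (hxbar : ∀ t, xbar t = (1 / (n : ℝ)) • ∑ i, x t i) :
    ∀ i, ∀ t, 2 ≤ t →
      ‖x t i - xbar t‖
        ≤ γ * lam ^ (t - 2) * ∑ j, ‖x 1 j‖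
          + (1 / (n : ℝ)) * ∑ j, ‖ε (t - 1) j‖
          + ‖ε (t - 1) i‖
          + γ * ∑ s ∈ Finset.Icc 1 (t - 2), lam ^ (t - s - 2) * ∑ j, ‖ε s j‖ :=
  stmt_10_general W hcol γ lam hγ hlam0 hlam1 hmix x ε hε xbar hxbar
end
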